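/- The bilinear operation on Markov(⊔SB) determined on classes of braids by [α,n]·[β,m] := [α ∗ β, n+m] for α ∈ SB_n, β ∈ SB_m, and extended ℂ(q,z)-bilinearly, is well defined (independent of the chosen representatives in ⊕_{n≥1} H_z(SB_n)), and it makes Markov(⊔SB) an associative, commutative, unital ℂ(q,z)-algebra whose unit is the class [1,1] of the trivial braid on one strand. -/

import Mathlib

open scoped TensorProduct DirectSum

set_option synthInstance.maxHeartbeats 1000000
set_option maxHeartbeats 2000000

namespace SingularHOMFLYPT

/-- Generators of the singular braid monoid on `n` strands: `pos i` is `σ_{i+1}`,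
`neg i` is `σ_{i+1}⁻¹` and `tau i` is `τ_{i+1}`, for `i : Fin (n-1)`. -/
inductive SBGen (n : ℕ) : Type
  | pos : Fin (n - 1) → SBGen n
  | neg : Fin (n - 1) → SBGen n
  | tau : Fin (n - 1) → SBGen n

open FreeMonoid in
/-- The defining relations of the singular braid monoid `SB_n` (Baez, Birman). -/
inductive SBRel (n : ℕ) : FreeMonoid (SBGen n) → FreeMonoid (SBGen n) → Prop
  | inv_right (i : Fin (n - 1)) : SBRel n (of (.pos i) * of (.neg i)) 1
  | inv_left (i : Fin (n - 1)) : SBRel n (of (.neg i) * of (.pos i)) 1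
  | sigma_tau (i : Fin (n - 1)) :
      SBRel n (of (.pos i) * of (.tau i)) (of (.tau i) * of (.pos i))
  | braid (i j : Fin (n - 1)) (h : (i : ℕ) + 1 = j ∨ (j : ℕ) + 1 = i) :
      SBRel n (of (.pos i) * of (.pos j) * of (.pos i))
        (of (.pos j) * of (.pos i) * of (.pos j))
  | braid_tau (i j : Fin (n - 1)) (h : (i : ℕ) + 1 = j ∨ (j : ℕ) + 1 = i) :
      SBRel n (of (.pos i) * of (.pos j) * of (.tau i))
        (of (.tau j) * of (.pos i) * of (.pos j))
  | comm_ss (i j : Fin (n - 1)) (h : (i : ℕ) + 2 ≤ j ∨ (j : ℕ) + 2 ≤ i) :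
      SBRel n (of (.pos i) * of (.pos j)) (of (.pos j) * of (.pos i))
  | comm_st (i j : Fin (n - 1)) (h : (i : ℕ) + 2 ≤ j ∨ (j : ℕ) + 2 ≤ i) :
      SBRel n (of (.pos i) * of (.tau j)) (of (.tau j) * of (.pos i))
  | comm_tt (i j : Fin (n - 1)) (h : (i : ℕ) + 2 ≤ j ∨ (j : ℕ) + 2 ≤ i) :
      SBRel n (of (.tau i) * of (.tau j)) (of (.tau j) * of (.tau i))

/-- The congruence on the free monoid generated by the singular braid relations. -/
def SBcon (n : ℕ) : Con (FreeMonoid (SBGen n)) := conGen (SBRel n)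

/-- The singular braid monoid on `n` strands, as a presented monoid. -/
abbrev SB (n : ℕ) : Type := (SBcon n).Quotient

/-- The canonical projection from the free monoid onto `SB n`. -/
def SB.mk {n : ℕ} : FreeMonoid (SBGen n) →* SB n := Con.mk' (SBcon n)

/-- The generator `σ_{i+1}` of `SB n`. -/
def sG {n : ℕ} (i : Fin (n - 1)) : SB n := SB.mk (.of (.pos i))

/-- The generator `σ_{i+1}⁻¹` of `SB n`. -/
def sInvG {n : ℕ} (i : Fin (n - 1)) : SB n := SB.mk (.of (.neg i))

/-- The generator `τ_{i+1}` of `SB n`. -/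
def tauG {n : ℕ} (i : Fin (n - 1)) : SB n := SB.mk (.of (.tau i))

theorem SB.sound {n : ℕ} {a b : FreeMonoid (SBGen n)} (h : SBRel n a b) :
    SB.mk a = SB.mk b :=
  Con.eq _ |>.2 (ConGen.Rel.of a b h)

/-- Lift a map on generators to a monoid homomorphism on `SB n`. -/
def SB.lift {n : ℕ} {M : Type*} [Monoid M] (f : SBGen n → M)
    (h : ∀ a b, SBRel n a b → FreeMonoid.lift f a = FreeMonoid.lift f b) :
    SB n →* M :=
  Con.lift _ (FreeMonoid.lift f)
    (Con.conGen_le.2 fun a b hab => (Con.ker_rel _).2 (h a b hab))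

@[simp] theorem SB.lift_mk {n : ℕ} {M : Type*} [Monoid M] (f : SBGen n → M)
    (h : ∀ a b, SBRel n a b → FreeMonoid.lift f a = FreeMonoid.lift f b)
    (w : FreeMonoid (SBGen n)) :
    SB.lift f h (SB.mk w) = FreeMonoid.lift f w :=
  Con.lift_coe _ w

/-- The number of singular points (`τ`-letters) of a generator. -/
def degGen {n : ℕ} : SBGen n → Multiplicative ℕ
  | .tau _ => Multiplicative.ofAdd 1
  | _ => 1

/-- The monoid homomorphism `deg : SB n →* (ℕ, +)` counting singular points. -/
def degM {n : ℕ} : SB n →* Multiplicative ℕ :=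
  SB.lift degGen (by
    rintro a b h
    cases h <;> simp [degGen, mul_comm])
/-- Shifting generators by `k`, viewing `SB n` inside `SB N` (strands `k+1, …, k+n`). -/
def shiftGen {n : ℕ} (N k : ℕ) (h : k + n ≤ N) : SBGen n → SBGen N
  | .pos i => .pos ⟨k + i, by have := i.2; omega⟩
  | .neg i => .neg ⟨k + i, by have := i.2; omega⟩
  | .tau i => .tau ⟨k + i, by have := i.2; omega⟩

theorem shiftGen_rel {n : ℕ} (N k : ℕ) (h : k + n ≤ N) {a b : FreeMonoid (SBGen n)}
    (hab : SBRel n a b) :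
    SBRel N (FreeMonoid.map (shiftGen N k h) a) (FreeMonoid.map (shiftGen N k h) b) := by
  cases hab <;>
    simp only [map_mul, map_one, FreeMonoid.map_of, shiftGen] <;>
    first
      | exact SBRel.inv_right _
      | exact SBRel.inv_left _
      | exact SBRel.sigma_tau _
      | (rename_i i j hij; exact SBRel.braid _ _ (by simp; omega))
      | (rename_i i j hij; first
          | exact SBRel.braid_tau _ _ (by simp; omega)
          | exact SBRel.comm_ss _ _ (by simp; omega)
          | exact SBRel.comm_st _ _ (by simp; omega)
          | exact SBRel.comm_tt _ _ (by simp; omega))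

/-- The monoid homomorphism `SB n →* SB N` placing a braid on the strands `k+1, …, k+n`. -/
def shiftHom {n : ℕ} (N k : ℕ) (h : k + n ≤ N) : SB n →* SB N :=
  Con.lift _ (SB.mk.comp (FreeMonoid.map (shiftGen N k h)))
    (Con.conGen_le.2 fun a b hab => (Con.ker_rel _).2 (SB.sound (shiftGen_rel N k h hab)))

/-- The natural inclusion `SB n →* SB N` (adding trivial strands on the right). -/
def inclSB {n : ℕ} (N : ℕ) (h : n ≤ N) : SB n →* SB N := shiftHom N 0 (by omega)

/-- `α ∗ β`: the braid obtained by placing `β` (on `m` strands) above (to the right of)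
`α` (on `n` strands), realized in `SB N` for `n + m ≤ N`. -/
def starIn {n m : ℕ} (N : ℕ) (h : n + m ≤ N) (α : SB n) (β : SB m) : SB N :=
  inclSB N (by omega) α * shiftHom N n h β
@[simp] theorem shiftHom_mk {n : ℕ} (N k : ℕ) (h : k + n ≤ N) (w : FreeMonoid (SBGen n)) :
    shiftHom N k h (SB.mk w) = SB.mk (FreeMonoid.map (shiftGen N k h) w) :=
  Con.lift_coe _ w

theorem shiftHom_sG {n : ℕ} (N k : ℕ) (h : k + n ≤ N) (i : Fin (n - 1)) :
    shiftHom N k h (sG i) = sG ⟨k + i.1, by have := i.2; omega⟩ := rfl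

theorem inclSB_sG {n : ℕ} (N : ℕ) (h : n ≤ N) (i : Fin (n - 1)) :
    inclSB N h (sG i) = sG ⟨0 + i.1, by have := i.2; omega⟩ := rfl

noncomputable section

/-- The field `ℂ(q)` of rational functions over `ℂ` in the variable `q`. -/
abbrev Kq : Type := RatFunc ℂ

/-- The field `ℂ(q,z) = ℂ(q)(z)` of rational functions over `ℂ` in the variables `q, z`. -/
abbrev Lqz : Type := RatFunc Kq

/-- The variable `q`, as an element of `ℂ(q)`. -/
def qK : Kq := RatFunc.X

/-- The variable `z`, as an element of `ℂ(q,z)`. -/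
def zL : Lqz := RatFunc.X

/-- The variable `q`, as an element of `ℂ(q,z)`. -/
def qL : Lqz := algebraMap Kq Lqz qK

/-- The Hecke relations `σ_k² = (q-1)σ_k + q` in the monoid algebra `ℂ(q)[SB_n]`. -/
def HeckeRel (n : ℕ) : MonoidAlgebra Kq (SB n) → MonoidAlgebra Kq (SB n) → Prop :=
  fun x y => ∃ i : Fin (n - 1),
    x = MonoidAlgebra.of Kq (SB n) (sG i) ^ 2 ∧
    y = (qK - 1) • MonoidAlgebra.of Kq (SB n) (sG i) + qK • 1

/-- The singular Hecke algebra `H(SB_n)`: the quotient of `ℂ(q)[SB_n]` by the two-sided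
ideal generated by the elements `σ_k² - (q-1)σ_k - q`. -/
abbrev Hecke (n : ℕ) : Type := RingQuot (HeckeRel n)

/-- The image of a singular braid in the singular Hecke algebra. -/
def heckeOf {n : ℕ} (β : SB n) : Hecke n :=
  RingQuot.mkAlgHom Kq (HeckeRel n) (MonoidAlgebra.of Kq (SB n) β)

/-- `H_z(SB_n) := ℂ(q,z) ⊗_{ℂ(q)} H(SB_n)`. -/
abbrev HeckeZ (n : ℕ) : Type := Lqz ⊗[Kq] Hecke n

/-- The image of a singular braid in `H_z(SB_n)`. -/
def ofHZ {n : ℕ} (β : SB n) : HeckeZ n := (1 : Lqz) ⊗ₜ[Kq] heckeOf β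

/-- The algebra homomorphism `H(SB_n) → H(SB_{n+1})` induced by the natural inclusion
`SB_n ↪ SB_{n+1}`. -/
def heckeIncl (n : ℕ) : Hecke n →ₐ[Kq] Hecke (n + 1) :=
  RingQuot.liftAlgHom Kq
    ⟨((RingQuot.mkAlgHom Kq (HeckeRel (n + 1))).comp
        (MonoidAlgebra.mapDomainAlgHom Kq Kq (inclSB (n + 1) (Nat.le_succ n)))),
      by
        rintro x y ⟨i, rfl, rfl⟩
        have hi := i.2
        set i' : Fin ((n + 1) - 1) := ⟨0 + i.1, by omega⟩ with hi'
        have hgen : (MonoidAlgebra.mapDomainAlgHom Kq Kq (inclSB (n + 1) (Nat.le_succ n)))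
            (MonoidAlgebra.of Kq (SB n) (sG i)) = MonoidAlgebra.of Kq (SB (n + 1)) (sG i') := by
          rw [MonoidAlgebra.of_apply, MonoidAlgebra.mapDomainAlgHom_apply,
            MonoidAlgebra.mapDomain_single, inclSB_sG, MonoidAlgebra.of_apply]
        have hrel : HeckeRel (n + 1) (MonoidAlgebra.of Kq (SB (n + 1)) (sG i') ^ 2)
            ((qK - 1) • MonoidAlgebra.of Kq (SB (n + 1)) (sG i') + qK • 1) := ⟨i', rfl, rfl⟩
        have hmk := RingQuot.mkAlgHom_rel Kq hrel
        simp only [map_pow, map_add, map_smul, map_one] at hmk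
        simp only [AlgHom.coe_comp, Function.comp_apply, map_pow, map_add, map_smul, map_one,
          hgen]
        exact hmk⟩

/-- The algebra homomorphism `ι_n : H_z(SB_n) → H_z(SB_{n+1})`. -/
def iotaHZ (n : ℕ) : HeckeZ n →ₐ[Lqz] HeckeZ (n + 1) :=
  Algebra.TensorProduct.map (AlgHom.id Lqz Lqz) (heckeIncl n)
/-- The `ℂ(q)`-subspace `H(S_dB_n)` of the singular Hecke algebra spanned by the images of
the singular braids with `d` singular points. -/
def HSd (n d : ℕ) : Submodule Kq (Hecke n) :=
  Submodule.span Kq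
    {x | ∃ β : SB n, degM β = Multiplicative.ofAdd d ∧ x = heckeOf β}

/-- The `ℂ(q,z)`-subspace `H_z(S_dB_n)` of `H_z(SB_n)` spanned by the images of the singular
braids with `d` singular points. -/
def HzSd (n d : ℕ) : Submodule Lqz (HeckeZ n) :=
  Submodule.span Lqz
    {x | ∃ β : SB n, degM β = Multiplicative.ofAdd d ∧ x = ofHZ β}

/-- Strand counts: the positive natural numbers. -/
abbrev Idx : Type := {n : ℕ // 0 < n}

/-- The direct sum `⊕_{n ≥ 1} H_z(SB_n)`. -/
abbrev MV : Type := ⨁ i : Idx, HeckeZ i.1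

instance instAddCommGroupHeckeZ (n : ℕ) : AddCommGroup (HeckeZ n) := inferInstance
instance instModuleHeckeZ (n : ℕ) : Module Lqz (HeckeZ n) := inferInstance
instance instAddCommGroupMV : AddCommGroup MV := inferInstance
instance instModuleMV : Module Lqz MV := inferInstance

/-- The canonical inclusion of the `n`-th summand of `⊕_{n ≥ 1} H_z(SB_n)`. -/
def mvof (i : Idx) : HeckeZ i.1 →ₗ[Lqz] MV :=
  DirectSum.lof Lqz Idx (fun i => HeckeZ i.1) i

/-- Successor of a strand count. -/
def succI (i : Idx) : Idx := ⟨i.1 + 1, Nat.succ_pos _⟩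

/-- The generator `σ_n` of `SB_{n+1}`. -/
def sigmaLast (i : Idx) : SB (i.1 + 1) := sG ⟨i.1 - 1, Nat.sub_lt i.2 one_pos⟩

/-- The Markov relations in `⊕_{n ≥ 1} H_z(SB_n)`: trace relations, stabilization relations
and positive Markov relations. -/
def markovRels : Set MV :=
  {x | ∃ (i : Idx) (a b : HeckeZ i.1), x = mvof i (a * b) - mvof i (b * a)} ∪
  {x | ∃ (i : Idx) (a : HeckeZ i.1), x = mvof i a - mvof (succI i) (iotaHZ i.1 a)} ∪
  {x | ∃ (i : Idx) (a : HeckeZ i.1),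
    x = mvof (succI i) (iotaHZ i.1 a * ofHZ (sigmaLast i)) - zL • mvof i a}

/-- The Markov module `Markov(⊔SB)`. -/
abbrev Markov : Type := MV ⧸ Submodule.span Lqz markovRels

instance instAddCommGroupMarkov : AddCommGroup Markov := inferInstance
instance instModuleMarkov : Module Lqz Markov := inferInstance

/-- The class `[a, m]` in the Markov module of an element `a ∈ H_z(SB_m)`. -/
def markovClass (m : ℕ) (hm : 0 < m) (a : HeckeZ m) : Markov :=
  Submodule.Quotient.mk (mvof ⟨m, hm⟩ a)

/-- The class `[β, m]` in the Markov module of a singular braid `β ∈ SB_m`. -/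
def braidClass (m : ℕ) (hm : 0 < m) (β : SB m) : Markov :=
  markovClass m hm (ofHZ β)

/-- The direct sum `⊕_{n ≥ 1} H_z(S_dB_n)`. -/
abbrev MVD (d : ℕ) : Type := ⨁ i : Idx, ↥(HzSd i.1 d)

instance instAddCommGroupMVD (d : ℕ) : AddCommGroup (MVD d) := inferInstance
instance instModuleMVD (d : ℕ) : Module Lqz (MVD d) := inferInstance

/-- The canonical inclusion of the `n`-th summand of `⊕_{n ≥ 1} H_z(S_dB_n)`. -/
def mvdof (d : ℕ) (i : Idx) : ↥(HzSd i.1 d) →ₗ[Lqz] MVD d :=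
  DirectSum.lof Lqz Idx (fun i => ↥(HzSd i.1 d)) i

/-- The Markov relations in `⊕_{n ≥ 1} H_z(S_dB_n)`. -/
def markovRelsD (d : ℕ) : Set (MVD d) :=
  {x | ∃ (i : Idx) (k l : ℕ), k + l = d ∧ ∃ (a b : HeckeZ i.1),
    a ∈ HzSd i.1 k ∧ b ∈ HzSd i.1 l ∧
    ∃ (hab : a * b ∈ HzSd i.1 d) (hba : b * a ∈ HzSd i.1 d),
      x = mvdof d i ⟨a * b, hab⟩ - mvdof d i ⟨b * a, hba⟩} ∪
  {x | ∃ (i : Idx) (a : HeckeZ i.1) (ha : a ∈ HzSd i.1 d)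
      (ha' : iotaHZ i.1 a ∈ HzSd (i.1 + 1) d),
    x = mvdof d i ⟨a, ha⟩ - mvdof d (succI i) ⟨iotaHZ i.1 a, ha'⟩} ∪
  {x | ∃ (i : Idx) (a : HeckeZ i.1) (ha : a ∈ HzSd i.1 d)
      (ha' : iotaHZ i.1 a * ofHZ (sigmaLast i) ∈ HzSd (i.1 + 1) d),
    x = mvdof d (succI i) ⟨iotaHZ i.1 a * ofHZ (sigmaLast i), ha'⟩ - zL • mvdof d i ⟨a, ha⟩}

/-- The `d`-th Markov module `Markov(⊔S_dB)`. -/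
abbrev MarkovD (d : ℕ) : Type := MVD d ⧸ Submodule.span Lqz (markovRelsD d)

instance instAddCommGroupMarkovD (d : ℕ) : AddCommGroup (MarkovD d) := inferInstance
instance instModuleMarkovD (d : ℕ) : Module Lqz (MarkovD d) := inferInstance

/-- The class `[β, m]` in the `d`-th Markov module of a singular braid `β ∈ S_dB_m`
(defined to be `0` if `β` does not have exactly `d` singular points). -/
def classD (d m : ℕ) (hm : 0 < m) (β : SB m) : MarkovD d :=
  if h : degM β = Multiplicative.ofAdd d then
    Submodule.Quotient.mk (mvdof d ⟨m, hm⟩ ⟨ofHZ β, Submodule.subset_span ⟨β, h, rfl⟩⟩)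
  else 0
/-- The singular braid `W_{d,k} = τ_1 τ_3 ⋯ τ_{2k-1} (τ_{2k+1}σ_{2k+1}) ⋯ (τ_{2d-1}σ_{2d-1})`
in `SB_{2d}` (for `1 ≤ d` and `k ≤ d`). -/
def W (d k : ℕ) : SB (2 * d) :=
  ((List.range d).map (fun j =>
    if h : 2 * j < 2 * d - 1 then
      (if j < k then tauG ⟨2 * j, h⟩ else tauG ⟨2 * j, h⟩ * sG ⟨2 * j, h⟩)
    else 1)).prod

/-- The class of `W_{d,k}` in the `d`-th Markov module: `[W_{d,k}, 2d]` for `d ≥ 1`, and the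
class `[W_{0,0}, 1]` of the trivial braid on one strand for `d = 0`. -/
def WclassD (d k : ℕ) : MarkovD d :=
  if hd : d = 0 then hd ▸ classD 0 1 one_pos 1
  else classD d (2 * d) (by omega) (W d k)

/-- The singular braid `α_0 τ_{i_1} α_1 τ_{i_2} ⋯ τ_{i_d} α_d`. -/
def sbWord {m d : ℕ} (α : Fin (d + 1) → SB m) (idx : Fin d → Fin (m - 1)) : SB m :=
  α 0 * ((List.ofFn fun j : Fin d => tauG (idx j) * α j.succ).prod)

/-- The singular braid `α_0 τ_{i_1} α_1 ⋯ τ_{i_{k-1}} α_{k-1} x α_k τ_{i_{k+1}} ⋯ τ_{i_d} α_d`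
obtained from `α_0 τ_{i_1} α_1 ⋯ τ_{i_d} α_d` by replacing the letter `τ_{i_k}` by `x`. -/
def sbWordRepl {m d : ℕ} (α : Fin (d + 1) → SB m) (idx : Fin d → Fin (m - 1))
    (k : Fin d) (x : SB m) : SB m :=
  α 0 * ((List.ofFn fun j : Fin d => (if j = k then x else tauG (idx j)) * α j.succ).prod)

/-- `RepGen false i = 1` (deleting a `τ` letter) and `RepGen true i = σ_{i+1}` (replacing a
`τ` letter by the corresponding `σ` letter). -/
def RepGen {m : ℕ} (ε : Bool) (i : Fin (m - 1)) : SB m := if ε then sG i else 1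

/-- `IsG d ε g` says that the linear map `g : Markov(⊔S_dB) → Markov(⊔S_{d-1}B)` is induced
by the family of maps `f_{n,ε}` (deletion of one `τ` letter for `ε = false`, replacement of one
`τ` letter by the corresponding `σ` letter for `ε = true`), i.e. that
`g([β,n]) = [f_{n,ε}(β), n]` for every singular braid `β ∈ S_dB_n`. -/
def IsG (d : ℕ) (ε : Bool) (g : MarkovD d →ₗ[Lqz] MarkovD (d - 1)) : Prop :=
  ∀ (m : ℕ) (hm : 0 < m) (α : Fin (d + 1) → SB m) (idx : Fin d → Fin (m - 1)),
    (∀ j, degM (α j) = Multiplicative.ofAdd 0) →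
    g (classD d m hm (sbWord α idx)) =
      ∑ k : Fin d, classD (d - 1) m hm (sbWordRepl α idx k (RepGen ε (idx k)))

/-- The `ℂ(q,z)`-vector space freely spanned by the set `S_dB_m` of singular braids on `m`
strands with `d` singular points. -/
abbrev FreeSd (m d : ℕ) : Type :=
  {β : SB m // degM β = Multiplicative.ofAdd d} →₀ Lqz

/-- The basis element of `ℂ(q,z)[S_dB_m]` corresponding to a braid `β ∈ S_dB_m` (defined to
be `0` if `β` does not have exactly `d` singular points). -/
def freeElem {m : ℕ} (d : ℕ) (β : SB m) : FreeSd m d :=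
  if h : degM β = Multiplicative.ofAdd d then Finsupp.single ⟨β, h⟩ 1 else 0

/-- Iterated product (power) with respect to a given bilinear multiplication. -/
def powAux (mul : Markov →ₗ[Lqz] Markov →ₗ[Lqz] Markov) (one x : Markov) : ℕ → Markov
  | 0 => one
  | k + 1 => mul x (powAux mul one x k)

/-!
On the summands, the product is `(a, b) ↦ [sh_0(a) · sh_n(b), n + m]`. It respects the Markov
relations in the second variable: the trace relation because elements supported on disjoint
blocks of strands commute, stabilization and the positive Markov move because they only involve
the last strand. It is symmetric, because conjugation by the braid `Δ_{n,m}` in which a block of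
`n` strands crosses a block of `m` strands exchanges the two blocks; hence it descends to the
quotient in both variables. Associativity and the unit come from the fact that the class
`[x, N]` does not change when `x` is included into more strands.
-/

/-! ### Singular braids on blocks of strands -/

theorem SB.induction_on {n : ℕ} {P : SB n → Prop} (x : SB n) (one : P 1)
    (mul : ∀ x y, P x → P y → P (x * y)) (of : ∀ g, P (SB.mk (.of g))) : P x := by
  induction x using Con.induction_on with
  | H w =>
    induction w using FreeMonoid.inductionOn' with
    | one => exact one
    | of_mul g w ih => rw [Con.coe_mul]; exact mul _ _ (of g) ih

/-- The letter `σ_{i+1}` (for `t = false`) or `τ_{i+1}` (for `t = true`) of `SB N`, indexed by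
`i : ℕ` and taking the junk value `1` when `i ≥ N - 1`. -/
def letter (N : ℕ) (t : Bool) (i : ℕ) : SB N :=
  if h : i < N - 1 then SB.mk (.of (bif t then .tau ⟨i, h⟩ else .pos ⟨i, h⟩)) else 1

theorem letter_of_lt {N : ℕ} (t : Bool) {i : ℕ} (h : i < N - 1) :
    letter N t i = SB.mk (.of (bif t then .tau ⟨i, h⟩ else .pos ⟨i, h⟩)) :=
  dif_pos h

theorem sG_mul_sInvG {n : ℕ} (i : Fin (n - 1)) : sG i * sInvG i = 1 := by
  rw [sG, sInvG, ← map_mul]; exact (SB.sound (.inv_right i)).trans (map_one _)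

theorem sInvG_mul_sG {n : ℕ} (i : Fin (n - 1)) : sInvG i * sG i = 1 := by
  rw [sG, sInvG, ← map_mul]; exact (SB.sound (.inv_left i)).trans (map_one _)

def sigmaUnit (N i : ℕ) : (SB N)ˣ where
  val := letter N false i
  inv := if h : i < N - 1 then sInvG ⟨i, h⟩ else 1
  val_inv := by
    unfold letter; split_ifs
    exacts [sG_mul_sInvG _, mul_one 1]
  inv_val := by
    unfold letter; split_ifs
    exacts [sInvG_mul_sG _, mul_one 1]

theorem commute_letter {N : ℕ} (t u : Bool) {i j : ℕ} (h : i + 2 ≤ j ∨ j + 2 ≤ i) :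
    Commute (letter N t i) (letter N u j) := by
  unfold letter
  split_ifs
  · cases t <;> cases u <;> simp only [cond_false, cond_true, Commute, SemiconjBy, ← map_mul]
    · exact SB.sound (.comm_ss _ _ h)
    · exact SB.sound (.comm_st _ _ h)
    · exact (SB.sound (.comm_st _ _ h.symm)).symm
    · exact SB.sound (.comm_tt _ _ h)
  all_goals first | exact Commute.one_left _ | exact Commute.one_right _

theorem semiconjBy_letter {N : ℕ} (t : Bool) {i j : ℕ} (h : i + 1 = j ∨ j + 1 = i)
    (hi : i < N - 1) (hj : j < N - 1) :
    SemiconjBy (letter N false i * letter N false j) (letter N t i) (letter N t j) := by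
  simp only [letter_of_lt _ hi, letter_of_lt _ hj, SemiconjBy, ← map_mul]
  cases t
  · exact SB.sound (.braid ⟨i, hi⟩ ⟨j, hj⟩ h)
  · exact SB.sound (.braid_tau ⟨i, hi⟩ ⟨j, hj⟩ h)

theorem shiftHom_letter {n N k : ℕ} (hk : k + n ≤ N) (t : Bool) {i : ℕ} (hi : i < n - 1) :
    shiftHom N k hk (letter n t i) = letter N t (k + i) := by
  rw [letter_of_lt t hi, letter_of_lt t (by omega)]
  cases t <;> rfl

theorem shiftHom_sInvG {n N k : ℕ} (hk : k + n ≤ N) (i : Fin (n - 1)) :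
    shiftHom N k hk (sInvG i) = ↑(sigmaUnit N (k + i))⁻¹ := by
  have := i.2
  change _ = dite _ _ _
  rw [dif_pos (by omega)]
  rfl

theorem semiconjBy_shiftHom {n N k k' : ℕ} {a : SB N} (hk : k + n ≤ N) (hk' : k' + n ≤ N)
    (h : ∀ t i, i < n - 1 → SemiconjBy a (letter N t (k + i)) (letter N t (k' + i)))
    (x : SB n) : SemiconjBy a (shiftHom N k hk x) (shiftHom N k' hk' x) := by
  induction x using SB.induction_on with
  | one => simpa only [map_one] using SemiconjBy.one_right a
  | mul x y hx hy => simpa only [map_mul] using hx.mul_right hy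
  | of g =>
    cases g with
    | pos i =>
      rw [show SB.mk (.of (.pos i)) = letter n false i from (letter_of_lt false i.2).symm,
        shiftHom_letter _ _ i.2, shiftHom_letter _ _ i.2]
      exact h false i i.2
    | tau i =>
      rw [show SB.mk (.of (.tau i)) = letter n true i from (letter_of_lt true i.2).symm,
        shiftHom_letter _ _ i.2, shiftHom_letter _ _ i.2]
      exact h true i i.2
    | neg i =>
      rw [← sInvG, shiftHom_sInvG, shiftHom_sInvG]
      exact SemiconjBy.units_inv_right (h false i i.2)

theorem shiftHom_shiftHom {m M N k k' k'' : ℕ} (hM : k' + m ≤ M) (hN : k + M ≤ N)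
    (hk : k + k' = k'') (x : SB m) :
    shiftHom N k hN (shiftHom M k' hM x) = shiftHom N k'' (by omega) x := by
  subst hk
  induction x using SB.induction_on with
  | one => simp only [map_one]
  | mul x y hx hy => simp only [map_mul, hx, hy]
  | of g => cases g <;> simp [shiftGen, add_assoc]

theorem shiftHom_zero_self {n : ℕ} (h : 0 + n ≤ n) (x : SB n) : shiftHom n 0 h x = x := by
  induction x using SB.induction_on with
  | one => simp only [map_one]
  | mul x y hx hy => simp only [map_mul, hx, hy]
  | of g => cases g <;> simp [shiftGen]

theorem commute_shiftHom {n₁ n₂ N k₁ k₂ : ℕ} (h₁ : k₁ + n₁ ≤ N) (h₂ : k₂ + n₂ ≤ N)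
    (sep : k₁ + n₁ ≤ k₂) (x : SB n₁) (y : SB n₂) :
    Commute (shiftHom N k₁ h₁ x) (shiftHom N k₂ h₂ y) :=
  semiconjBy_shiftHom h₂ h₂ (fun t i _ => Commute.symm <|
    semiconjBy_shiftHom h₁ h₁ (fun u j _ => commute_letter t u (by omega)) x) y

/-- The braid `σ_{k+m} ⋯ σ_{k+2} σ_{k+1}`, in which the strand `k+1` crosses the strands
`k+2, …, k+m+1`. -/
def cycleBraid (N k : ℕ) : ℕ → (SB N)ˣ
  | 0 => 1
  | m + 1 => sigmaUnit N (k + m) * cycleBraid N k m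

theorem commute_letter_cycleBraid {N k q : ℕ} (t : Bool) (m : ℕ) (h : q + 2 ≤ k ∨ k + m + 1 ≤ q) :
    Commute (letter N t q) (cycleBraid N k m) := by
  induction m with
  | zero => exact Commute.one_right _
  | succ m ih =>
    rw [cycleBraid, Units.val_mul]
    exact (commute_letter t false (by omega)).mul_right (ih (by omega))

theorem cycleBraid_semiconjBy {N k : ℕ} (t : Bool) :
    ∀ (m q : ℕ), k ≤ q → q + 2 ≤ k + m → k + m < N →
      SemiconjBy (cycleBraid N k m : SB N) (letter N t (q + 1)) (letter N t q)
  | 0, _, _, _, _ | 1, _, _, _, _ => by omega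
  | m + 2, q, hk, hq, hN => by
    rw [cycleBraid, Units.val_mul]
    by_cases hlt : q + 2 ≤ k + (m + 1)
    · exact SemiconjBy.mul_left (commute_letter false t (by omega))
        (cycleBraid_semiconjBy t (m + 1) q hk hlt (by omega))
    · obtain rfl : q = k + m := by omega
      rw [cycleBraid, Units.val_mul, ← mul_assoc]
      exact SemiconjBy.mul_left
        (semiconjBy_letter (i := k + (m + 1)) (j := k + m) t (Or.inr rfl) (by omega) (by omega))
        (commute_letter_cycleBraid t m (by omega)).symm

theorem cycleBraid_mul_cycleBraid_semiconjBy {N k : ℕ} (t : Bool) (m : ℕ) (hN : k + m + 1 < N) :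
    SemiconjBy (cycleBraid N k m * cycleBraid N (k + 1) m : SB N)
      (letter N t k) (letter N t (k + m)) := by
  induction m with
  | zero => simp [cycleBraid]
  | succ m ih =>
    have hc : Commute (cycleBraid N k m : SB N) (letter N false (k + m + 1)) :=
      (commute_letter_cycleBraid false m (Or.inr le_rfl)).symm
    have e : (cycleBraid N k (m + 1) * cycleBraid N (k + 1) (m + 1) : SB N) =
        letter N false (k + m) * letter N false (k + m + 1) *
          (cycleBraid N k m * cycleBraid N (k + 1) m : SB N) := by
      simp only [cycleBraid, Units.val_mul, sigmaUnit, mul_assoc,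
        show k + 1 + m = k + m + 1 by omega]
      rw [← mul_assoc (cycleBraid N k m : SB N), hc.eq, mul_assoc]
    rw [e, show k + (m + 1) = k + m + 1 by omega]
    exact (semiconjBy_letter (i := k + m) t (Or.inl rfl) (by omega) (by omega)).mul_left
      (ih (by omega))

/-- The braid `c_{0,m} c_{1,m} ⋯ c_{n-1,m}` (with `c_{k,m} = cycleBraid N k m`), in which the
block of the first `n` strands crosses the block of the next `m` strands. -/
def blockSwap (N : ℕ) : ℕ → ℕ → (SB N)ˣ
  | 0, _ => 1
  | n + 1, m => blockSwap N n m * cycleBraid N n m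

theorem commute_letter_blockSwap {N q : ℕ} (t : Bool) (n m : ℕ) (h : n + m ≤ q) :
    Commute (letter N t q) (blockSwap N n m) := by
  induction n with
  | zero => exact Commute.one_right _
  | succ n ih =>
    rw [blockSwap, Units.val_mul]
    exact (ih (by omega)).mul_right (commute_letter_cycleBraid (k := n) t m (by omega))

theorem blockSwap_semiconjBy_low {N m : ℕ} (t : Bool) :
    ∀ (n q : ℕ), q + 2 ≤ n → n + m ≤ N →
      SemiconjBy (blockSwap N n m : SB N) (letter N t q) (letter N t (q + m))
  | 0, _, _, _ | 1, _, _, _ => by omega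
  | n + 2, q, hq, hN => by
    rw [blockSwap, Units.val_mul]
    by_cases hlt : q + 2 ≤ n + 1
    · exact (blockSwap_semiconjBy_low t (n + 1) q hlt (by omega)).mul_left
        (commute_letter_cycleBraid (k := n + 1) t m (by omega)).symm
    · obtain rfl : q = n := by omega
      rw [blockSwap, Units.val_mul, mul_assoc]
      exact SemiconjBy.mul_left (commute_letter_blockSwap t q m le_rfl).symm
        (cycleBraid_mul_cycleBraid_semiconjBy t m (by omega))

theorem blockSwap_semiconjBy_high {N m q : ℕ} (t : Bool) (hq : q + 2 ≤ m) :
    ∀ n, n + m ≤ N →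
      SemiconjBy (blockSwap N n m : SB N) (letter N t (n + q)) (letter N t q)
  | 0, _ => by simp [blockSwap]
  | n + 1, hN => by
    rw [blockSwap, Units.val_mul, show n + 1 + q = n + q + 1 by omega]
    exact (blockSwap_semiconjBy_high t hq n (by omega)).mul_left
      (cycleBraid_semiconjBy t m (n + q) (by omega) (by omega) (by omega))

theorem blockSwap_semiconjBy_shiftHom_zero {n m N : ℕ} (hN : n + m ≤ N) (α : SB n) :
    SemiconjBy (blockSwap N n m : SB N) (shiftHom N 0 (by omega) α) (shiftHom N m (by omega) α) :=
  semiconjBy_shiftHom _ _ (fun t i hi => by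
    simpa only [zero_add, add_comm m] using blockSwap_semiconjBy_low t n i (by omega) hN) α

theorem blockSwap_semiconjBy_shiftHom {n m N : ℕ} (hN : n + m ≤ N) (β : SB m) :
    SemiconjBy (blockSwap N n m : SB N) (shiftHom N n hN β) (shiftHom N 0 (by omega) β) :=
  semiconjBy_shiftHom _ _ (fun t i hi => by
    simpa only [zero_add] using blockSwap_semiconjBy_high t (by omega) n hN) β

/-! ### Shifts in the Hecke algebras -/

def heckeShift {n : ℕ} (N k : ℕ) (h : k + n ≤ N) : Hecke n →ₐ[Kq] Hecke N :=
  RingQuot.liftAlgHom Kq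
    ⟨(RingQuot.mkAlgHom Kq (HeckeRel N)).comp
        (MonoidAlgebra.mapDomainAlgHom Kq Kq (shiftHom N k h)), by
      rintro _ _ ⟨i, rfl, rfl⟩
      have hof : MonoidAlgebra.mapDomainAlgHom Kq Kq (shiftHom N k h) (.of Kq _ (sG i)) =
          .of Kq _ (sG ⟨k + i, by omega⟩) := by
        simp [MonoidAlgebra.of_apply, shiftHom_sG]
      have hrel : HeckeRel N (.of Kq _ (sG ⟨k + i, by omega⟩) ^ 2)
          ((qK - 1) • .of Kq _ (sG ⟨k + i, by omega⟩) + qK • 1) := ⟨_, rfl, rfl⟩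
      simpa only [AlgHom.comp_apply, map_pow, map_add, map_smul, map_one, hof] using
        RingQuot.mkAlgHom_rel Kq hrel⟩

def hzShift {n : ℕ} (N k : ℕ) (h : k + n ≤ N) : HeckeZ n →ₐ[Lqz] HeckeZ N :=
  Algebra.TensorProduct.map (AlgHom.id Lqz Lqz) (heckeShift N k h)

theorem iotaHZ_eq_hzShift (n : ℕ) : iotaHZ n = hzShift (n + 1) 0 (by omega) := rfl

def ofHZHom (n : ℕ) : SB n →* HeckeZ n where
  toFun := ofHZ
  map_one' := by rw [ofHZ, heckeOf, map_one, map_one]; rfl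
  map_mul' x y := by
    simp only [ofHZ, heckeOf, map_mul, Algebra.TensorProduct.tmul_mul_tmul, one_mul]

theorem ofHZHom_apply {n : ℕ} (β : SB n) : ofHZHom n β = ofHZ β := rfl

theorem hzShift_ofHZ {n : ℕ} (N k : ℕ) (h : k + n ≤ N) (β : SB n) :
    hzShift N k h (ofHZ β) = ofHZ (shiftHom N k h β) := by
  simp [hzShift, ofHZ, heckeShift, heckeOf, MonoidAlgebra.of_apply]

theorem HeckeZ.linearMap_ext {n : ℕ} {M : Type*} [AddCommMonoid M] [Module Lqz M]
    {f g : HeckeZ n →ₗ[Lqz] M} (h : ∀ β : SB n, f (ofHZ β) = g (ofHZ β)) : f = g := by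
  refine LinearMap.ext fun x => ?_
  induction x using TensorProduct.induction_on with
  | zero => simp only [map_zero]
  | add x y hx hy => simp only [map_add, hx, hy]
  | tmul l y =>
    obtain ⟨p, rfl⟩ := RingQuot.mkAlgHom_surjective Kq (HeckeRel n) y
    induction p using MonoidAlgebra.induction_on generalizing l with
    | of β =>
      rw [← mul_one l, ← smul_eq_mul, ← TensorProduct.smul_tmul', map_smul, map_smul]
      exact congrArg (l • ·) (h β)
    | add p q hp hq => simp only [map_add, TensorProduct.tmul_add, hp, hq]
    | smul c p hp =>
      rw [map_smul (RingQuot.mkAlgHom Kq (HeckeRel n)), ← TensorProduct.smul_tmul, hp]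

theorem semiconjBy_of_ofHZ {n N : ℕ} {u : HeckeZ N} {F G : HeckeZ n →ₗ[Lqz] HeckeZ N}
    (h : ∀ β, SemiconjBy u (F (ofHZ β)) (G (ofHZ β))) (a : HeckeZ n) :
    SemiconjBy u (F a) (G a) :=
  LinearMap.congr_fun (HeckeZ.linearMap_ext (f := (LinearMap.mulLeft Lqz u) ∘ₗ F)
    (g := (LinearMap.mulRight Lqz u) ∘ₗ G) h) a

theorem commute_hzShift {n₁ n₂ N k₁ k₂ : ℕ} (h₁ : k₁ + n₁ ≤ N) (h₂ : k₂ + n₂ ≤ N)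
    (sep : k₁ + n₁ ≤ k₂) (a : HeckeZ n₁) (b : HeckeZ n₂) :
    Commute (hzShift N k₁ h₁ a) (hzShift N k₂ h₂ b) :=
  semiconjBy_of_ofHZ (F := (hzShift N k₂ h₂).toLinearMap) (G := (hzShift N k₂ h₂).toLinearMap)
    (fun y => Commute.symm <| semiconjBy_of_ofHZ (F := (hzShift N k₁ h₁).toLinearMap)
      (G := (hzShift N k₁ h₁).toLinearMap) (fun x => by
        simp only [AlgHom.toLinearMap_apply, hzShift_ofHZ]
        exact ((commute_shiftHom h₁ h₂ sep x y).map (ofHZHom N)).symm) a) b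

theorem hzShift_hzShift {m M N k k' k'' : ℕ} (hM : k' + m ≤ M) (hN : k + M ≤ N)
    (hk : k + k' = k'') (a : HeckeZ m) :
    hzShift N k hN (hzShift M k' hM a) = hzShift N k'' (by omega) a := by
  refine LinearMap.congr_fun (HeckeZ.linearMap_ext (f := (hzShift N k hN).toLinearMap ∘ₗ
    (hzShift M k' hM).toLinearMap) (g := (hzShift N k'' (by omega)).toLinearMap) fun β => ?_) a
  simp only [LinearMap.comp_apply, AlgHom.toLinearMap_apply, hzShift_ofHZ,
    shiftHom_shiftHom hM hN hk]

theorem hzShift_zero_self {n : ℕ} (h : 0 + n ≤ n) (a : HeckeZ n) : hzShift n 0 h a = a := by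
  refine LinearMap.congr_fun (HeckeZ.linearMap_ext (f := (hzShift n 0 h).toLinearMap)
    (g := LinearMap.id) fun β => ?_) a
  simp only [AlgHom.toLinearMap_apply, hzShift_ofHZ, shiftHom_zero_self, LinearMap.id_apply]

/-! ### The product on the Markov module -/

theorem markovClass_mul_comm (m : ℕ) (hm : 0 < m) (a b : HeckeZ m) :
    markovClass m hm (a * b) = markovClass m hm (b * a) := by
  rw [markovClass, markovClass, Submodule.Quotient.eq]
  exact Submodule.subset_span (Or.inl (Or.inl ⟨⟨m, hm⟩, a, b, rfl⟩))

theorem markovClass_iotaHZ (m : ℕ) (hm : 0 < m) (a : HeckeZ m) :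
    markovClass (m + 1) m.succ_pos (iotaHZ m a) = markovClass m hm a := by
  rw [markovClass, markovClass, eq_comm, Submodule.Quotient.eq]
  exact Submodule.subset_span (Or.inl (Or.inr ⟨⟨m, hm⟩, a, rfl⟩))

theorem markovClass_iotaHZ_mul_sigmaLast (m : ℕ) (hm : 0 < m) (a : HeckeZ m) :
    markovClass (m + 1) m.succ_pos (iotaHZ m a * ofHZ (sigmaLast ⟨m, hm⟩)) =
      zL • markovClass m hm a := by
  rw [markovClass, markovClass, ← Submodule.Quotient.mk_smul, Submodule.Quotient.eq]
  exact Submodule.subset_span (Or.inr ⟨⟨m, hm⟩, a, rfl⟩)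

theorem markovClass_eq_of_semiconjBy {m : ℕ} (hm : 0 < m) (u : (HeckeZ m)ˣ) {x y : HeckeZ m}
    (h : SemiconjBy (u : HeckeZ m) x y) : markovClass m hm x = markovClass m hm y := by
  rw [(Units.eq_mul_inv_iff_mul_eq u).2 h.eq.symm, mul_assoc, markovClass_mul_comm, mul_assoc,
    Units.inv_mul, mul_one]

theorem markovClass_hzShift_zero {M N : ℕ} (hM : 0 < M) (hN : 0 < N) (h : 0 + M ≤ N)
    (a : HeckeZ M) : markovClass N hN (hzShift N 0 h a) = markovClass M hM a := by
  induction N, (show M ≤ N by omega) using Nat.le_induction with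
  | base => rw [hzShift_zero_self]
  | succ N hMN ih =>
    rw [← hzShift_hzShift (M := N) (k' := 0) (by omega) (by omega) rfl, ← iotaHZ_eq_hzShift,
      markovClass_iotaHZ N (by omega), ih (by omega) (by omega)]

/-- `a ∗ b = sh_0(a) · sh_n(b) ∈ H_z(SB_N)`, for `a ∈ H_z(SB_n)` and `b ∈ H_z(SB_m)`. -/
def hzStar {n m : ℕ} (N : ℕ) (h : n + m ≤ N) (a : HeckeZ n) (b : HeckeZ m) : HeckeZ N :=
  hzShift N 0 (by omega) a * hzShift N n h b

theorem hzStar_ofHZ {n m : ℕ} (N : ℕ) (h : n + m ≤ N) (α : SB n) (β : SB m) :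
    hzStar N h (ofHZ α) (ofHZ β) = ofHZ (starIn N h α β) := by
  rw [hzStar, hzShift_ofHZ, hzShift_ofHZ]
  exact (map_mul (ofHZHom N) _ _).symm

theorem hzShift_zero_hzStar {n m M N : ℕ} (hM : n + m ≤ M) (hN : 0 + M ≤ N) (a : HeckeZ n)
    (b : HeckeZ m) : hzShift N 0 hN (hzStar M hM a b) = hzStar N (by omega) a b := by
  rw [hzStar, hzStar, map_mul, hzShift_hzShift _ _ rfl, hzShift_hzShift _ _ (zero_add n)]

theorem hzStar_hzShift_zero_right {n m M N : ℕ} (hM : 0 + m ≤ M) (hN : n + M ≤ N) (a : HeckeZ n)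
    (b : HeckeZ m) : hzStar N hN a (hzShift M 0 hM b) = hzStar N (by omega) a b := by
  rw [hzStar, hzStar, hzShift_hzShift _ _ (add_zero n)]

theorem markovClass_hzStar {n m N : ℕ} (hn : 0 < n) (h : n + m ≤ N) (a : HeckeZ n)
    (b : HeckeZ m) :
    markovClass N (by omega) (hzStar N h a b) =
      markovClass (n + m) (by omega) (hzStar (n + m) le_rfl a b) := by
  rw [← hzShift_zero_hzStar le_rfl (by omega), markovClass_hzShift_zero]

theorem hzStar_assoc {n m l N : ℕ} (h : n + m + l ≤ N) (a : HeckeZ n) (b : HeckeZ m)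
    (c : HeckeZ l) :
    hzStar N h (hzStar (n + m) le_rfl a b) c =
      hzStar N (by omega) a (hzStar (m + l) le_rfl b c) := by
  simp only [hzStar, map_mul, hzShift_hzShift _ _ (add_zero 0), hzShift_hzShift _ _ (zero_add n),
    hzShift_hzShift _ _ (add_zero n), hzShift_hzShift _ _ rfl, mul_assoc]

theorem markovClass_hzStar_comm {n m N : ℕ} (hN : 0 < N) (h : n + m ≤ N) (a : HeckeZ n)
    (b : HeckeZ m) :
    markovClass N hN (hzStar N h a b) = markovClass N hN (hzStar N (by omega) b a) := by
  set u := Units.map (ofHZHom N) (blockSwap N n m)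
  have ha : SemiconjBy (u : HeckeZ N) (hzShift N 0 (by omega) a) (hzShift N m (by omega) a) :=
    semiconjBy_of_ofHZ (F := (hzShift N 0 _).toLinearMap) (G := (hzShift N m _).toLinearMap)
      (fun α => by
        simp only [AlgHom.toLinearMap_apply, hzShift_ofHZ]
        exact (blockSwap_semiconjBy_shiftHom_zero h α).map (ofHZHom N)) a
  have hb : SemiconjBy (u : HeckeZ N) (hzShift N n h b) (hzShift N 0 (by omega) b) :=
    semiconjBy_of_ofHZ (F := (hzShift N n h).toLinearMap) (G := (hzShift N 0 _).toLinearMap)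
      (fun β => by
        simp only [AlgHom.toLinearMap_apply, hzShift_ofHZ]
        exact (blockSwap_semiconjBy_shiftHom h β).map (ofHZHom N)) b
  rw [hzStar, markovClass_eq_of_semiconjBy hN u (ha.mul_right hb), markovClass_mul_comm]
  rfl

/-- The bilinear map `(a, b) ↦ [a ∗ b, n + m]` on `H_z(SB_n) × H_z(SB_m)`. -/
def starClass (i j : Idx) : HeckeZ i.1 →ₗ[Lqz] HeckeZ j.1 →ₗ[Lqz] Markov :=
  ((LinearMap.mul Lqz (HeckeZ (i.1 + j.1))).compl₁₂ (hzShift _ 0 (by omega)).toLinearMap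
    (hzShift _ i.1 le_rfl).toLinearMap).compr₂
    ((Submodule.mkQ _).comp (mvof ⟨i.1 + j.1, by have := i.2; omega⟩))

theorem starClass_apply (i j : Idx) (a : HeckeZ i.1) (b : HeckeZ j.1) :
    starClass i j a b = markovClass (i.1 + j.1) (by have := i.2; omega) (hzStar _ le_rfl a b) :=
  rfl

theorem starClass_comm (i j : Idx) (a : HeckeZ i.1) (b : HeckeZ j.1) :
    starClass i j a b = starClass j i b a := by
  rw [starClass_apply, starClass_apply, markovClass_hzStar_comm, markovClass_hzStar j.2]

theorem starClass_mul_comm_right (i j : Idx) (a : HeckeZ i.1) (b₁ b₂ : HeckeZ j.1) :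
    starClass i j a (b₁ * b₂) = starClass i j a (b₂ * b₁) := by
  simp only [starClass_apply, hzStar, map_mul]
  set A := hzShift (i.1 + j.1) 0 (by omega) a
  set B₂ := hzShift (i.1 + j.1) i.1 le_rfl b₂
  have hA : Commute A B₂ := commute_hzShift _ _ (by omega) a b₂
  rw [← mul_assoc, markovClass_mul_comm, ← mul_assoc, ← hA.eq, mul_assoc]

theorem starClass_iotaHZ_right (i j : Idx) (a : HeckeZ i.1) (b : HeckeZ j.1) :
    starClass i (succI j) a (iotaHZ j.1 b) = starClass i j a b := by
  change markovClass _ _ (hzStar (n := i.1) (m := j.1 + 1) _ le_rfl a (iotaHZ j.1 b)) = _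
  rw [starClass_apply, iotaHZ_eq_hzShift, hzStar_hzShift_zero_right, markovClass_hzStar i.2]

theorem starClass_iotaHZ_mul_sigmaLast_right (i j : Idx) (a : HeckeZ i.1) (b : HeckeZ j.1) :
    starClass i (succI j) a (iotaHZ j.1 b * ofHZ (sigmaLast j)) = zL • starClass i j a b := by
  have hσ : hzShift (i.1 + j.1 + 1) i.1 le_rfl (ofHZ (sigmaLast j)) =
      ofHZ (sigmaLast ⟨i.1 + j.1, by have := i.2; omega⟩) := by
    rw [hzShift_ofHZ, sigmaLast, sigmaLast, shiftHom_sG]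
    congr 2
    ext
    have := j.2
    dsimp only
    omega
  have hι : hzStar (n := i.1) (i.1 + j.1 + 1) le_rfl a (iotaHZ j.1 b) =
      iotaHZ (i.1 + j.1) (hzStar (i.1 + j.1) le_rfl a b) := by
    rw [iotaHZ_eq_hzShift, iotaHZ_eq_hzShift, hzStar_hzShift_zero_right, hzShift_zero_hzStar]
  change markovClass (i.1 + j.1 + 1) (by omega) (hzStar (n := i.1) (m := j.1 + 1) _ le_rfl a
    (iotaHZ j.1 b * ofHZ (sigmaLast j))) = _
  rw [hzStar, map_mul, ← mul_assoc, ← hzStar, hσ, hι, markovClass_iotaHZ_mul_sigmaLast,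
    starClass_apply]

theorem starClass_assoc {n m l : ℕ} (hn : 0 < n) (hl : 0 < l) (a : HeckeZ n)
    (b : HeckeZ m) (c : HeckeZ l) :
    starClass ⟨n + m, by omega⟩ ⟨l, hl⟩ (hzStar (n + m) le_rfl a b) c =
      starClass ⟨n, hn⟩ ⟨m + l, by omega⟩ a (hzStar (m + l) le_rfl b c) := by
  rw [starClass_apply, starClass_apply, hzStar_assoc, markovClass_hzStar hn]

theorem starClass_one_right (i : Idx) (a : HeckeZ i.1) :
    starClass i ⟨1, one_pos⟩ a (ofHZ 1) = markovClass i.1 i.2 a := by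
  rw [starClass_apply, hzStar, ← ofHZHom_apply, map_one, map_one, mul_one,
    markovClass_hzShift_zero]

def starBilin : MV →ₗ[Lqz] MV →ₗ[Lqz] Markov :=
  DirectSum.toModule Lqz Idx _ fun i =>
    (DirectSum.toModule Lqz Idx _ fun j => (starClass i j).flip).flip

theorem starBilin_mvof (i j : Idx) (a : HeckeZ i.1) (b : HeckeZ j.1) :
    starBilin (mvof i a) (mvof j b) = starClass i j a b := by
  simp [starBilin, mvof, DirectSum.toModule_lof]

theorem starBilin_flip : starBilin.flip = starBilin := by
  refine DirectSum.linearMap_ext _ fun i => LinearMap.ext fun a =>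
    DirectSum.linearMap_ext _ fun j => LinearMap.ext fun b => ?_
  change starBilin (mvof j b) (mvof i a) = starBilin (mvof i a) (mvof j b)
  rw [starBilin_mvof, starBilin_mvof, starClass_comm]

theorem span_markovRels_le_ker_flip :
    Submodule.span Lqz markovRels ≤ LinearMap.ker starBilin.flip := by
  rw [Submodule.span_le]
  rintro _ ((⟨i, a, b, rfl⟩ | ⟨i, a, rfl⟩) | ⟨i, a, rfl⟩) <;>
    refine LinearMap.mem_ker.2 (DirectSum.linearMap_ext _ fun j => LinearMap.ext fun c => ?_) <;>
    change starBilin (mvof j c) _ = 0 <;>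
    simp only [map_sub, map_smul, starBilin_mvof, sub_eq_zero]
  · exact starClass_mul_comm_right j i c a b
  · exact ((starBilin_mvof j (succI i) c _).trans (starClass_iotaHZ_right j i c a)).symm
  · exact (starBilin_mvof j (succI i) c _).trans (starClass_iotaHZ_mul_sigmaLast_right j i c a)

def markovMul : Markov →ₗ[Lqz] Markov →ₗ[Lqz] Markov :=
  starBilin.liftQ₂ _ _ (starBilin_flip ▸ span_markovRels_le_ker_flip) span_markovRels_le_ker_flip

theorem markovMul_markovClass (n m : ℕ) (hn : 0 < n) (hm : 0 < m) (a : HeckeZ n) (b : HeckeZ m) :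
    markovMul (markovClass n hn a) (markovClass m hm b) = starClass ⟨n, hn⟩ ⟨m, hm⟩ a b := by
  rw [markovMul, markovClass, markovClass, LinearMap.liftQ₂_mk, starBilin_mvof]

theorem Markov.linearMap_ext {M : Type*} [AddCommGroup M] [Module Lqz M] {f g : Markov →ₗ[Lqz] M}
    (h : ∀ n hn a, f (markovClass n hn a) = g (markovClass n hn a)) : f = g :=
  Submodule.linearMap_qext _ (DirectSum.linearMap_ext _ fun i => LinearMap.ext (h i.1 i.2))

theorem markovMul_comm (x y : Markov) : markovMul x y = markovMul y x := by
  have : markovMul = markovMul.flip := Markov.linearMap_ext fun n hn a =>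
    Markov.linearMap_ext fun m hm b => by
      rw [LinearMap.flip_apply, markovMul_markovClass, markovMul_markovClass, starClass_comm]
  exact LinearMap.congr_fun₂ this x y

theorem markovMul_assoc (x y z : Markov) :
    markovMul (markovMul x y) z = markovMul x (markovMul y z) := by
  have : markovMul.compr₂ markovMul =
      (LinearMap.llcomp Lqz Markov Markov Markov ∘ₗ markovMul).compl₂ markovMul :=
    Markov.linearMap_ext fun n hn a => Markov.linearMap_ext fun m hm b =>
      Markov.linearMap_ext fun l hl c => by
        simp only [LinearMap.compr₂_apply, LinearMap.compl₂_apply, LinearMap.comp_apply,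
          LinearMap.llcomp_apply]
        rw [markovMul_markovClass, markovMul_markovClass, starClass_apply, starClass_apply,
          markovMul_markovClass, markovMul_markovClass]
        exact starClass_assoc hn hl a b c
  exact LinearMap.congr_fun (LinearMap.congr_fun₂ this x y) z

theorem markovMul_one_left (x : Markov) : markovMul (braidClass 1 one_pos 1) x = x := by
  have : markovMul (braidClass 1 one_pos 1) = LinearMap.id := Markov.linearMap_ext fun n hn a => by
    rw [braidClass, markovMul_markovClass, starClass_comm, starClass_one_right, LinearMap.id_apply]
  exact LinearMap.congr_fun this x

/-- The bilinear operation on `Markov(⊔SB)` determined on classes of braids by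
`[α,n]·[β,m] := [α ∗ β, n+m]`, extended `ℂ(q,z)`-bilinearly, is well defined, and it makes
`Markov(⊔SB)` an associative, commutative, unital `ℂ(q,z)`-algebra whose unit is the class
`[1,1]` of the trivial braid on one strand. -/
theorem markov_mul_well_defined :
    ∃ mul : Markov →ₗ[Lqz] Markov →ₗ[Lqz] Markov,
      (∀ (n m : ℕ) (hn : 0 < n) (hm : 0 < m) (α : SB n) (β : SB m),
        mul (braidClass n hn α) (braidClass m hm β) =
          braidClass (n + m) (by omega) (starIn (n + m) le_rfl α β)) ∧
      (∀ x y z : Markov, mul (mul x y) z = mul x (mul y z)) ∧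
      (∀ x y : Markov, mul x y = mul y x) ∧
      (∀ x : Markov, mul (braidClass 1 one_pos (1 : SB 1)) x = x) := by
  refine ⟨markovMul, fun n m hn hm α β => ?_, markovMul_assoc, markovMul_comm, markovMul_one_left⟩
  rw [braidClass, braidClass, markovMul_markovClass, starClass_apply, hzStar_ofHZ]
  rfl

end
end SingularHOMFLYPT
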